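/- arXiv:math/0408212 — 3 statements merged into one kernel-verified Lean document; each statement's English description precedes it below -/
import Mathlib

section
/- Assume v(a_i) >= 0 for every i with r_0 <= i <= r and a_i != 0 (i.e. v is not in S). Let x be a nonzero element of L. (a) If v(x) >= 0, then v(phi^n(x)) >= 0 for every n >= 1, and the sequence min(0, v(phi^n(x)))/q^(r*n) converges to 0. (b) If v(x) < 0, then for every n >= 1 one has phi^n(x) != 0 and v(phi^n(x)) = q^(r*n) * v(x), and the sequence min(0, v(phi^n(x)))/q^(r*n) converges to v(x). (Lemma 2.4 of the paper.) -/
/-!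
When no coefficient of `φ` has a pole, `φ` maps the valuation ring into itself; and at a pole
of `y` the leading term `y ^ q ^ r` of `φ y` strictly dominates the others (as `q > 1`), so
`v (φ y) = q ^ r * v y`. Iterating, `min 0 (v (φⁿ x)) / q ^ (r n)` is constant, equal to
`min 0 (v x)`.
-/

open Filter Topology Finset

universe u

section Drinfeld

variable {L : Type u} [Field L] {k : Type*} [Field k]

/-- The integer value of the valuation `v` at `y` (junk value `0` at `y = 0`). -/
noncomputable def vz (v : L → WithTop ℤ) (y : L) : ℤ := (v y).untopD 0

/-- `v : L → ℤ ∪ {∞}` is a normalized discrete valuation: `v 0 = ∞`, `v` is finite and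
surjective onto `ℤ` on nonzero elements, `v (x * y) = v x + v y` and
`v (x + y) ≥ min (v x) (v y)`. -/
structure IsDVal (v : L → WithTop ℤ) : Prop where
  map_zero : v 0 = ⊤
  ne_top : ∀ x : L, x ≠ 0 → v x ≠ ⊤
  map_mul : ∀ x y : L, v (x * y) = v x + v y
  add_min : ∀ x y : L, min (v x) (v y) ≤ v (x + y)
  surj : ∀ n : ℤ, ∃ x : L, v x = (n : WithTop ℤ)

/-- `res : L → k` restricted to the valuation ring of `v` is the quotient map onto the
residue field `k` of `v`. -/
structure IsResidue (v : L → WithTop ℤ) (res : L → k) : Prop where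
  map_one : res 1 = 1
  map_add : ∀ x y : L, 0 ≤ v x → 0 ≤ v y → res (x + y) = res x + res y
  map_mul : ∀ x y : L, 0 ≤ v x → 0 ≤ v y → res (x * y) = res x * res y
  eq_zero_iff : ∀ x : L, 0 ≤ v x → (res x = 0 ↔ 0 < v x)
  surj : ∀ c : k, ∃ x : L, 0 ≤ v x ∧ res x = c

/-- The angular component of `y` at `v`, with respect to the uniformizer `π` and the
residue map `res`: the residue of `y * π ^ (-v y)`. -/
noncomputable def ac (v : L → WithTop ℤ) (π : L) (res : L → k) (y : L) : k :=
  res (y * π ^ (-(vz v y)))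

/-- The `F_q`-linear map `φ(x) = ∑_{i=r₀}^{r} a i * x^(q^i)`. -/
noncomputable def phiMap (q r₀ r : ℕ) (a : ℕ → L) (x : L) : L :=
  ∑ i ∈ Finset.Icc r₀ r, a i * x ^ q ^ i

/-- The set `P_v ⊆ ℚ` of possible exceptional valuations:
`(v(a i) - v(a j))/(q^j - q^i)` for `r₀ ≤ i < j ≤ r` with `a i ≠ 0 ≠ a j`, together with `0`. -/
def Pset (q : ℕ) (v : L → WithTop ℤ) (r₀ r : ℕ) (a : ℕ → L) : Set ℚ :=
  {0} ∪ {α : ℚ | ∃ i j : ℕ, r₀ ≤ i ∧ i < j ∧ j ≤ r ∧ a i ≠ 0 ∧ a j ≠ 0 ∧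
      α = ((vz v (a i) : ℚ) - (vz v (a j) : ℚ)) / ((q : ℚ) ^ j - (q : ℚ) ^ i)}

/-- The set `J(α)` of indices where `v(a i) + q^i * α` attains its minimum. -/
def Jset (q : ℕ) (v : L → WithTop ℤ) (r₀ r : ℕ) (a : ℕ → L) (α : ℚ) : Set ℕ :=
  {i : ℕ | r₀ ≤ i ∧ i ≤ r ∧ a i ≠ 0 ∧
    ∀ j : ℕ, r₀ ≤ j → j ≤ r → a j ≠ 0 →
      (vz v (a i) : ℚ) + (q : ℚ) ^ i * α ≤ (vz v (a j) : ℚ) + (q : ℚ) ^ j * α}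

open scoped Classical in
/-- The set `R_v(α) ⊆ k_v`: `1` together with the nonzero roots of
`∑_{i ∈ J(α)} ac(a i) * X^(q^i)`. -/
noncomputable def Rset (q : ℕ) (v : L → WithTop ℤ) (π : L) (res : L → k)
    (r₀ r : ℕ) (a : ℕ → L) (α : ℚ) : Set k :=
  {1} ∪ {γ : k | γ ≠ 0 ∧
    ∑ i ∈ Finset.Icc r₀ r,
      (if i ∈ Jset q v r₀ r a α then ac v π res (a i) * γ ^ q ^ i else 0) = 0}

/-- The exceptional condition `Exc(y)`: `v y ∈ P_v` and `ac y ∈ R_v(v y)`. -/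
def Exc (q : ℕ) (v : L → WithTop ℤ) (π : L) (res : L → k)
    (r₀ r : ℕ) (a : ℕ → L) (y : L) : Prop :=
  ((vz v y : ℚ) ∈ Pset q v r₀ r a) ∧ ac v π res y ∈ Rset q v π res r₀ r a ((vz v y : ℚ))

/-- The sequence `min(0, v(φⁿ x)) / q^(r n)` whose limit is minus the local height of `x`. -/
noncomputable def locSeq (q r : ℕ) (v : L → WithTop ℤ) (φ : L → L) (x : L) (n : ℕ) : ℝ :=
  ((min 0 (vz v (φ^[n] x)) : ℤ) : ℝ) / (q : ℝ) ^ (r * n)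

namespace IsDVal

variable {v : L → WithTop ℤ}

theorem map_one (hv : IsDVal v) : v 1 = 0 := by
  obtain ⟨m, hm⟩ := WithTop.ne_top_iff_exists.mp (hv.ne_top 1 one_ne_zero)
  have h := hv.map_mul 1 1
  rw [one_mul, ← hm] at h
  have : m = 0 := by norm_cast at h; omega
  rw [← hm, this, WithTop.coe_zero]

def toAddValuation (hv : IsDVal v) : AddValuation L (WithTop ℤ) :=
  AddValuation.of v hv.map_zero hv.map_one hv.add_min hv.map_mul

end IsDVal

theorem vz_eq_of_eq_coe {K : Type*} {v : K → WithTop ℤ} {y : K} {m : ℤ} (h : v y = m) :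
    vz v y = m := by
  rw [vz, h, WithTop.untopD_coe]

theorem vz_nonneg {K : Type*} {v : K → WithTop ℤ} {y : K} (h : 0 ≤ v y) : 0 ≤ vz v y := by
  rw [vz]
  cases hy : v y with
  | top => rfl
  | coe m => rw [hy] at h; exact_mod_cast h

section phiMap

variable {q r₀ r : ℕ} {a : ℕ → L}

theorem AddValuation.map_phiMap_nonneg {Γ₀ : Type*} [LinearOrderedAddCommMonoidWithTop Γ₀]
    (w : AddValuation L Γ₀) (ha : ∀ i ∈ Icc r₀ r, 0 ≤ w (a i)) {y : L} (hy : 0 ≤ w y) :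
    0 ≤ w (phiMap q r₀ r a y) :=
  w.map_le_sum fun i hi => by
    rw [w.map_mul, w.map_pow]
    exact add_nonneg (ha i hi) (nsmul_nonneg hy _)

theorem AddValuation.map_iterate_phiMap_nonneg {Γ₀ : Type*}
    [LinearOrderedAddCommMonoidWithTop Γ₀] (w : AddValuation L Γ₀)
    (ha : ∀ i ∈ Icc r₀ r, 0 ≤ w (a i)) {y : L} (hy : 0 ≤ w y) (n : ℕ) :
    0 ≤ w ((phiMap q r₀ r a)^[n] y) :=
  Function.Iterate.rec (fun z => 0 ≤ w z) hy (fun _ hz => w.map_phiMap_nonneg ha hz) n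

theorem AddValuation.map_phiMap_of_neg (w : AddValuation L (WithTop ℤ)) (hq : 1 < q)
    (hr₀r : r₀ ≤ r) (har : a r = 1) (ha : ∀ i ∈ Icc r₀ r, 0 ≤ w (a i))
    {y : L} {m : ℤ} (hm : m < 0) (hy : w y = m) :
    w (phiMap q r₀ r a y) = ((q : ℤ) ^ r * m : ℤ) := by
  have hterm (i : ℕ) : w (y ^ q ^ i) = ((q : ℤ) ^ i * m : ℤ) := by
    rw [w.map_pow, hy, ← WithTop.coe_nsmul, nsmul_eq_mul]
    push_cast; rfl
  have hlower : ((q : ℤ) ^ r * m : ℤ) <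
      w (∑ i ∈ (Icc r₀ r).erase r, a i * y ^ q ^ i) := by
    refine w.map_lt_sum' (WithTop.coe_lt_top _) fun i hi => ?_
    obtain ⟨hir, hi⟩ := mem_erase.mp hi
    have hir : i < r := lt_of_le_of_ne (mem_Icc.mp hi).2 hir
    have hpow : (q : ℤ) ^ i < (q : ℤ) ^ r := pow_lt_pow_right₀ (by exact_mod_cast hq) hir
    rw [w.map_mul, hterm]
    calc (((q : ℤ) ^ r * m : ℤ) : WithTop ℤ) < ((q : ℤ) ^ i * m : ℤ) := by
          exact_mod_cast mul_lt_mul_of_neg_right hpow hm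
      _ ≤ w (a i) + ((q : ℤ) ^ i * m : ℤ) := le_add_of_nonneg_left (ha i hi)
  rw [phiMap, ← add_sum_erase _ _ (mem_Icc.mpr ⟨hr₀r, le_rfl⟩), har, one_mul, ← hterm,
    w.map_add_eq_of_lt_left (hterm r ▸ hlower)]

theorem AddValuation.map_iterate_phiMap_of_neg (w : AddValuation L (WithTop ℤ)) (hq : 1 < q)
    (hr₀r : r₀ ≤ r) (har : a r = 1) (ha : ∀ i ∈ Icc r₀ r, 0 ≤ w (a i))
    {y : L} {m : ℤ} (hm : m < 0) (hy : w y = m) (n : ℕ) :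
    w ((phiMap q r₀ r a)^[n] y) = ((q : ℤ) ^ (r * n) * m : ℤ) := by
  induction n with
  | zero => simpa using hy
  | succ n ih =>
    have hneg : (q : ℤ) ^ (r * n) * m < 0 := mul_neg_of_pos_of_neg (by positivity) hm
    rw [Function.iterate_succ_apply', w.map_phiMap_of_neg hq hr₀r har ha hneg ih]
    congr 1
    ring

end phiMap

section locSeq

variable {K : Type*} {q r : ℕ} {v : K → WithTop ℤ} {φ : K → K} {x : K}

theorem locSeq_eq_zero (h : ∀ n, 0 ≤ v (φ^[n] x)) : locSeq q r v φ x = 0 := by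
  funext n
  simp [locSeq, vz_nonneg (h n)]

theorem locSeq_eq_const (hq : 0 < q) {m : ℤ} (hm : m ≤ 0)
    (h : ∀ n, v (φ^[n] x) = ((q : ℤ) ^ (r * n) * m : ℤ)) :
    locSeq q r v φ x = fun _ => (m : ℝ) := by
  funext n
  have hneg : (q : ℤ) ^ (r * n) * m ≤ 0 := mul_nonpos_of_nonneg_of_nonpos (by positivity) hm
  rw [locSeq, vz_eq_of_eq_coe (h n), min_eq_right hneg]
  push_cast
  field_simp

end locSeq

theorem statement2_general
    (p q : ℕ) (hp : p.Prime) (hq : ∃ s : ℕ, 0 < s ∧ q = p ^ s)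
    (v : L → WithTop ℤ) (hv : IsDVal v)
    (r₀ r : ℕ) (hr₀r : r₀ ≤ r)
    (a : ℕ → L) (har : a r = 1)
    (hnS : ∀ i ∈ Finset.Icc r₀ r, a i ≠ 0 → 0 ≤ v (a i))
    (x : L) :
    (0 ≤ v x →
      (∀ n : ℕ, 1 ≤ n → 0 ≤ v ((phiMap q r₀ r a)^[n] x)) ∧
      Filter.Tendsto (locSeq q r v (phiMap q r₀ r a) x) Filter.atTop (nhds (0 : ℝ))) ∧
    (v x < 0 →
      (∀ n : ℕ, 1 ≤ n → (phiMap q r₀ r a)^[n] x ≠ 0 ∧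
        v ((phiMap q r₀ r a)^[n] x) = (((q : ℤ) ^ (r * n) * vz v x : ℤ) : WithTop ℤ)) ∧
      Filter.Tendsto (locSeq q r v (phiMap q r₀ r a) x) Filter.atTop (nhds (vz v x : ℝ))) := by
  have hq1 : 1 < q := by
    obtain ⟨s, hs, rfl⟩ := hq
    exact Nat.one_lt_pow hs.ne' hp.one_lt
  set w := hv.toAddValuation
  have ha : ∀ i ∈ Icc r₀ r, 0 ≤ w (a i) := fun i hi => by
    by_cases hai : a i = 0
    · simp [w, hai]
    · exact hnS i hi hai
  refine ⟨fun hx0 => ?_, fun hxneg => ?_⟩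
  · have hiter : ∀ n, 0 ≤ v ((phiMap q r₀ r a)^[n] x) := w.map_iterate_phiMap_nonneg ha hx0
    exact ⟨fun n _ => hiter n, locSeq_eq_zero hiter ▸ tendsto_const_nhds⟩
  · obtain ⟨m, hm⟩ := WithTop.ne_top_iff_exists.mp hxneg.ne_top
    have hmneg : m < 0 := by rw [← hm] at hxneg; exact_mod_cast hxneg
    have hiter : ∀ n, v ((phiMap q r₀ r a)^[n] x) = ((q : ℤ) ^ (r * n) * m : ℤ) :=
      w.map_iterate_phiMap_of_neg hq1 hr₀r har ha hmneg hm.symm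
    refine ⟨fun n _ => ⟨fun h0 => ?_, ?_⟩, ?_⟩
    · exact WithTop.top_ne_coe (hv.map_zero ▸ h0 ▸ hiter n)
    · rw [vz_eq_of_eq_coe hm.symm]; exact hiter n
    · rw [locSeq_eq_const (by omega) hmneg.le hiter, vz_eq_of_eq_coe hm.symm]
      exact tendsto_const_nhds

/-- Lemma 2.4: if no coefficient `a i` has a pole at `v` (i.e. `v ∉ S`), then:
(a) if `v(x) ≥ 0` then `v(φⁿ(x)) ≥ 0` for all `n ≥ 1` and the local-height sequence tends
to `0`; (b) if `v(x) < 0` then `v(φⁿ(x)) = q^(rn) v(x)` for all `n ≥ 1` and the sequence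
tends to `v(x)`. -/
theorem statement2
    (p q : ℕ) (hp : p.Prime) (hq : ∃ s : ℕ, 0 < s ∧ q = p ^ s)
    [CharP L p] (F : Subfield L) (hF : Nat.card F = q)
    (v : L → WithTop ℤ) (hv : IsDVal v)
    (r₀ r : ℕ) (hr1 : 1 ≤ r) (hr₀r : r₀ ≤ r)
    (a : ℕ → L) (har₀ : a r₀ ≠ 0) (har : a r = 1)
    (hnS : ∀ i ∈ Finset.Icc r₀ r, a i ≠ 0 → 0 ≤ v (a i))
    (x : L) (hx : x ≠ 0) :
    (0 ≤ v x →
      (∀ n : ℕ, 1 ≤ n → 0 ≤ v ((phiMap q r₀ r a)^[n] x)) ∧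
      Filter.Tendsto (locSeq q r v (phiMap q r₀ r a) x) Filter.atTop (nhds (0 : ℝ))) ∧
    (v x < 0 →
      (∀ n : ℕ, 1 ≤ n → (phiMap q r₀ r a)^[n] x ≠ 0 ∧
        v ((phiMap q r₀ r a)^[n] x) = (((q : ℤ) ^ (r * n) * vz v x : ℤ) : WithTop ℤ)) ∧
      Filter.Tendsto (locSeq q r v (phiMap q r₀ r a) x) Filter.atTop (nhds (vz v x : ℝ))) :=
  statement2_general p q hp hq v hv r₀ r hr₀r a har hnS x

end Drinfeld
end

section
/- Assume v lies in S (so M_v < 0), and let x be a nonzero element of L with v(x) <= 0. Then either Exc(x) holds, or the sequence min(0, v(phi^n(x)))/q^(r*n) converges to a limit V satisfying V <= M_v/q^r. (Lemmas 2.6 and 2.7 of the paper: if x is not in the exceptional set then the local height of x is at least -M_v/q^r up to the normalization factor.) -/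
open Filter Topology Finset

universe u

section Drinfeld

variable {L : Type u} [Field L] {k : Type*} [Field k]

/-!
Let `m = min_i (v(a_i) + q^i v(x))`; it is negative because `v ∈ S` and `v(x) ≤ 0`. The residues
of the terms of `φ(x)` of valuation `m` add up to the initial form of `J(v x)` at `ac x`, which
vanishes only if `x` is exceptional, so `v(φ x) = m ≤ v(a_i)` for all `i`. From then on the top
term `y ^ q ^ r` strictly dominates `φ(y)`, so each further step multiplies the valuation by
`q ^ r` and the sequence is eventually constant equal to `m / q ^ r`. The only exception,
`φ(y) = a₀ y + y ^ 2` over `F₂`, costs one extra step.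
-/

theorem vz_of_eq_coe {α : Type u} {w : α → WithTop ℤ} {y : α} {n : ℤ} (h : w y = n) :
    vz w y = n := by
  rw [vz, h, WithTop.untopD_coe]

variable {v : L → WithTop ℤ}

namespace IsDVal

def addValuation (hv : IsDVal v) : AddValuation L (WithTop ℤ) :=
  AddValuation.of v hv.map_zero hv.map_one hv.add_min hv.map_mul

theorem map_pow (hv : IsDVal v) (y : L) (n : ℕ) : v (y ^ n) = n • v y :=
  hv.addValuation.map_pow y n

theorem map_add_eq_of_lt_left (hv : IsDVal v) {y z : L} (h : v y < v z) : v (y + z) = v y :=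
  hv.addValuation.map_add_eq_of_lt_left h

theorem coe_vz (hv : IsDVal v) {y : L} (hy : y ≠ 0) : (vz v y : WithTop ℤ) = v y := by
  obtain ⟨n, hn⟩ := WithTop.ne_top_iff_exists.mp (hv.ne_top y hy)
  rw [vz, ← hn, WithTop.untopD_coe]

theorem ne_zero_of_eq_coe (hv : IsDVal v) {y : L} {n : ℤ} (h : v y = n) : y ≠ 0 := by
  rintro rfl; rw [hv.map_zero] at h; exact WithTop.top_ne_coe h

end IsDVal

theorem WithTop.nonneg_add_coe_neg {w : WithTop ℤ} {m : ℤ} (h : (m : WithTop ℤ) ≤ w) :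
    0 ≤ w + ↑(-m) := by
  induction w using WithTop.recTopCoe with
  | top => exact le_top
  | coe n =>
    have := WithTop.coe_le_coe.mp h
    exact_mod_cast (by omega : 0 ≤ n + -m)

theorem WithTop.pos_add_coe_neg {w : WithTop ℤ} {m : ℤ} (h : (m : WithTop ℤ) < w) :
    0 < w + ↑(-m) := by
  induction w using WithTop.recTopCoe with
  | top => exact WithTop.coe_lt_top 0
  | coe n =>
    have := WithTop.coe_lt_coe.mp h
    exact_mod_cast (by omega : 0 < n + -m)

variable {π : L} {res : L → k}

theorem IsDVal.map_uniformizer_zpow (hv : IsDVal v) (hπ : v π = 1) (n : ℤ) : v (π ^ n) = n := by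
  have hpow (m : ℕ) : v (π ^ m) = m := by
    rw [hv.map_pow, hπ, nsmul_one]
  cases n with
  | ofNat m => rw [Int.ofNat_eq_natCast, zpow_natCast, hpow]; rfl
  | negSucc m =>
    rw [zpow_negSucc, show v (π ^ (m + 1))⁻¹ = -v (π ^ (m + 1)) from hv.addValuation.map_inv,
      hpow, Int.negSucc_eq]
    rfl

theorem IsDVal.map_mul_uniformizer_zpow (hv : IsDVal v) (hπ : v π = 1) (y : L) (n : ℤ) :
    v (y * π ^ n) = v y + n := by
  rw [hv.map_mul, hv.map_uniformizer_zpow hπ]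

theorem IsDVal.map_mul_uniformizer_zpow_neg_vz (hv : IsDVal v) (hπ : v π = 1) {y : L}
    (hy : y ≠ 0) : v (y * π ^ (-vz v y)) = 0 := by
  rw [hv.map_mul_uniformizer_zpow hπ, ← hv.coe_vz hy, ← WithTop.coe_add, add_neg_cancel,
    WithTop.coe_zero]

namespace IsResidue

theorem map_zero (hv : IsDVal v) (hres : IsResidue v res) : res 0 = 0 :=
  (hres.eq_zero_iff 0 (by simp [hv.map_zero])).mpr (by simp [hv.map_zero])

theorem map_sum (hv : IsDVal v) (hres : IsResidue v res) {ι : Type*} (s : Finset ι) (f : ι → L)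
    (h : ∀ i ∈ s, 0 ≤ v (f i)) : res (∑ i ∈ s, f i) = ∑ i ∈ s, res (f i) := by
  induction s using Finset.cons_induction with
  | empty => simp [hres.map_zero hv]
  | cons i s hi ih =>
    rw [Finset.forall_mem_cons] at h
    rw [Finset.sum_cons, Finset.sum_cons, ← ih h.2,
      hres.map_add _ _ h.1 (hv.addValuation.map_le_sum h.2)]

end IsResidue

theorem ac_ne_zero (hv : IsDVal v) (hπ : v π = 1) (hres : IsResidue v res) {y : L} (hy : y ≠ 0) :
    ac v π res y ≠ 0 := by
  have hunit := hv.map_mul_uniformizer_zpow_neg_vz hπ hy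
  rw [ac, Ne, hres.eq_zero_iff _ hunit.ge, hunit]
  exact lt_irrefl 0

theorem ac_mul (hv : IsDVal v) (hπ : v π = 1) (hres : IsResidue v res) {y z : L}
    (hy : y ≠ 0) (hz : z ≠ 0) : ac v π res (y * z) = ac v π res y * ac v π res z := by
  have hvz : vz v (y * z) = vz v y + vz v z := by
    have := hv.map_mul y z
    rw [← hv.coe_vz hy, ← hv.coe_vz hz, ← WithTop.coe_add] at this
    exact vz_of_eq_coe this
  rw [ac, ac, ac, ← hres.map_mul _ _ (hv.map_mul_uniformizer_zpow_neg_vz hπ hy).ge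
    (hv.map_mul_uniformizer_zpow_neg_vz hπ hz).ge, hvz, neg_add,
    zpow_add₀ (hv.ne_zero_of_eq_coe hπ)]
  ring_nf

theorem ac_pow (hv : IsDVal v) (hπ : v π = 1) (hres : IsResidue v res) {y : L} (hy : y ≠ 0)
    (n : ℕ) : ac v π res (y ^ n) = ac v π res y ^ n := by
  induction n with
  | zero => simp [ac, vz, hv.map_one, hres.map_one]
  | succ n ih => rw [pow_succ, pow_succ, ac_mul hv hπ hres (pow_ne_zero _ hy) hy, ih]

theorem res_mul_zpow_neg (hv : IsDVal v) (hπ : v π = 1) (hres : IsResidue v res) {y : L} {m : ℤ}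
    (h : (m : WithTop ℤ) ≤ v y) : res (y * π ^ (-m)) = if v y = m then ac v π res y else 0 := by
  split_ifs with hym
  · rw [ac, vz_of_eq_coe hym]
  · have hpos : 0 < v (y * π ^ (-m)) := by
      rw [hv.map_mul_uniformizer_zpow hπ]
      exact WithTop.pos_add_coe_neg (lt_of_le_of_ne h (Ne.symm hym))
    exact (hres.eq_zero_iff _ hpos.le).mpr hpos

theorem v_sum_eq_of_sum_ac_ne_zero (hv : IsDVal v) (hπ : v π = 1) (hres : IsResidue v res)
    {ι : Type*} {s : Finset ι} {f : ι → L} {m : ℤ}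
    (hle : ∀ i ∈ s, (m : WithTop ℤ) ≤ v (f i))
    (hne : ∑ i ∈ s, (if v (f i) = m then ac v π res (f i) else 0) ≠ 0) :
    v (∑ i ∈ s, f i) = m := by
  have hnonneg (z : L) (hz : (m : WithTop ℤ) ≤ v z) : 0 ≤ v (z * π ^ (-m)) := by
    rw [hv.map_mul_uniformizer_zpow hπ]
    exact WithTop.nonneg_add_coe_neg hz
  have hres_sum : res ((∑ i ∈ s, f i) * π ^ (-m)) =
      ∑ i ∈ s, if v (f i) = m then ac v π res (f i) else 0 := by
    rw [Finset.sum_mul, hres.map_sum hv _ _ fun i hi => hnonneg _ (hle i hi)]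
    exact Finset.sum_congr rfl fun i hi => res_mul_zpow_neg hv hπ hres (hle i hi)
  have hsum_le : (m : WithTop ℤ) ≤ v (∑ i ∈ s, f i) := hv.addValuation.map_le_sum hle
  by_contra hsum
  rw [res_mul_zpow_neg hv hπ hres hsum_le, if_neg hsum] at hres_sum
  exact hne hres_sum.symm

open scoped Classical in
/-- The polynomial whose nonzero roots make up `Rset q v π res r₀ r a α`, evaluated at `γ`. -/
noncomputable def initialForm (q : ℕ) (v : L → WithTop ℤ) (π : L) (res : L → k)
    (r₀ r : ℕ) (a : ℕ → L) (α : ℚ) (γ : k) : k :=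
  ∑ i ∈ Finset.Icc r₀ r,
    (if i ∈ Jset q v r₀ r a α then ac v π res (a i) * γ ^ q ^ i else 0)

variable {q r₀ r : ℕ} {a : ℕ → L}

theorem IsDVal.map_coeff_mul_pow (hv : IsDVal v) {y : L} (hy : y ≠ 0) {i : ℕ} (hai : a i ≠ 0) :
    v (a i * y ^ q ^ i) = ((vz v (a i) + (q : ℤ) ^ i * vz v y : ℤ) : WithTop ℤ) := by
  rw [hv.map_mul, hv.map_pow, ← hv.coe_vz hy, ← hv.coe_vz hai]
  norm_cast

theorem Jset_nonempty (hr₀r : r₀ ≤ r) (har : a r ≠ 0) (α : ℚ) :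
    (Jset q v r₀ r a α).Nonempty := by
  classical
  obtain ⟨i, hi, hmin⟩ := ((Finset.Icc r₀ r).filter (a · ≠ 0)).exists_min_image
    (fun i => (vz v (a i) : ℚ) + (q : ℚ) ^ i * α)
    ⟨r, Finset.mem_filter.mpr ⟨Finset.mem_Icc.mpr ⟨hr₀r, le_rfl⟩, har⟩⟩
  simp only [Finset.mem_filter, Finset.mem_Icc] at hi hmin
  exact ⟨i, hi.1.1, hi.1.2, hi.2, fun j hj₀ hjr haj => hmin j ⟨⟨hj₀, hjr⟩, haj⟩⟩

theorem vz_term_le_of_mem_Jset {n : ℤ} {i j : ℕ} (hi : i ∈ Jset q v r₀ r a n) (hj₀ : r₀ ≤ j)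
    (hjr : j ≤ r) (haj : a j ≠ 0) :
    vz v (a i) + (q : ℤ) ^ i * n ≤ vz v (a j) + (q : ℤ) ^ j * n := by
  exact_mod_cast hi.2.2.2 j hj₀ hjr haj

theorem le_vz_of_mem_Jset {n : ℤ} (hn : n ≤ 0) {i j : ℕ} (hi : i ∈ Jset q v r₀ r a n)
    (hj₀ : r₀ ≤ j) (hjr : j ≤ r) (haj : a j ≠ 0) :
    vz v (a i) + (q : ℤ) ^ i * n ≤ vz v (a j) := by
  have := vz_term_le_of_mem_Jset hi hj₀ hjr haj
  nlinarith [pow_nonneg (Int.natCast_nonneg q) j]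

theorem IsDVal.map_coeff_mul_pow_eq_iff_mem_Jset (hv : IsDVal v) {y : L} (hy : y ≠ 0) {i j : ℕ}
    (hi : i ∈ Jset q v r₀ r a (vz v y)) (hj : j ∈ Finset.Icc r₀ r) :
    v (a j * y ^ q ^ j) = ((vz v (a i) + (q : ℤ) ^ i * vz v y : ℤ) : WithTop ℤ) ↔
      j ∈ Jset q v r₀ r a (vz v y) := by
  obtain ⟨hj₀, hjr⟩ := Finset.mem_Icc.mp hj
  constructor
  · intro hvj
    have haj : a j ≠ 0 := by
      rintro h0; rw [h0, zero_mul, hv.map_zero] at hvj; exact WithTop.top_ne_coe hvj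
    rw [hv.map_coeff_mul_pow hy haj, WithTop.coe_eq_coe] at hvj
    refine ⟨hj₀, hjr, haj, fun l hl₀ hlr hal => ?_⟩
    have hvj' : (vz v (a j) : ℚ) + (q : ℚ) ^ j * vz v y = vz v (a i) + (q : ℚ) ^ i * vz v y := by
      exact_mod_cast hvj
    linarith [hi.2.2.2 l hl₀ hlr hal]
  · intro hjJ
    rw [hv.map_coeff_mul_pow hy hjJ.2.2.1]
    have h1 := hi.2.2.2 j hj₀ hjr hjJ.2.2.1
    have h2 := hjJ.2.2.2 i hi.1 hi.2.1 hi.2.2.1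
    exact_mod_cast le_antisymm h2 h1

theorem v_phiMap_of_initialForm_ne_zero (hv : IsDVal v) (hπ : v π = 1) (hres : IsResidue v res)
    {y : L} (hy : y ≠ 0) {i : ℕ} (hi : i ∈ Jset q v r₀ r a (vz v y))
    (hform : initialForm q v π res r₀ r a (vz v y) (ac v π res y) ≠ 0) :
    v (phiMap q r₀ r a y) = ((vz v (a i) + (q : ℤ) ^ i * vz v y : ℤ) : WithTop ℤ) := by
  refine v_sum_eq_of_sum_ac_ne_zero hv hπ hres (fun j hj => ?_) ?_
  · rcases eq_or_ne (a j) 0 with haj | haj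
    · simp [haj, hv.map_zero]
    · rw [hv.map_coeff_mul_pow hy haj]
      obtain ⟨hj₀, hjr⟩ := Finset.mem_Icc.mp hj
      exact_mod_cast vz_term_le_of_mem_Jset hi hj₀ hjr haj
  · convert hform using 1
    refine Finset.sum_congr rfl fun j hj => ?_
    by_cases hjJ : j ∈ Jset q v r₀ r a (vz v y)
    · rw [if_pos ((hv.map_coeff_mul_pow_eq_iff_mem_Jset hy hi hj).mpr hjJ), if_pos hjJ,
        ac_mul hv hπ hres hjJ.2.2.1 (pow_ne_zero _ hy), ac_pow hv hπ hres hy]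
    · rw [if_neg (mt (hv.map_coeff_mul_pow_eq_iff_mem_Jset hy hi hj).mp hjJ), if_neg hjJ]

theorem mem_Pset_of_mem_Jset (hq : 1 < q) {α : ℚ} {i j : ℕ} (hij : i < j)
    (hi : i ∈ Jset q v r₀ r a α) (hj : j ∈ Jset q v r₀ r a α) : α ∈ Pset q v r₀ r a := by
  refine Or.inr ⟨i, j, hi.1, hij, hj.2.1, hi.2.2.1, hj.2.2.1, ?_⟩
  have hqij : (q : ℚ) ^ i < (q : ℚ) ^ j := pow_lt_pow_right₀ (by exact_mod_cast hq) hij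
  rw [eq_div_iff (sub_ne_zero.mpr hqij.ne')]
  linarith [hi.2.2.2 j hj.1 hj.2.1 hj.2.2.1, hj.2.2.2 i hi.1 hi.2.1 hi.2.2.1]

/-- A vanishing initial form needs two indices in `J(v y)`, which puts `v y` in `P_v`. -/
theorem initialForm_ne_zero_of_not_exc (hv : IsDVal v) (hπ : v π = 1) (hres : IsResidue v res)
    (hq : 1 < q) {y : L} (hy : y ≠ 0) {i : ℕ} (hi : i ∈ Jset q v r₀ r a (vz v y))
    (hexc : ¬ Exc q v π res r₀ r a y) :
    initialForm q v π res r₀ r a (vz v y) (ac v π res y) ≠ 0 := by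
  intro hform
  suffices hP : (vz v y : ℚ) ∈ Pset q v r₀ r a from
    hexc ⟨hP, Or.inr ⟨ac_ne_zero hv hπ hres hy, hform⟩⟩
  obtain ⟨j, hjJ, hji⟩ : ∃ j ∈ Jset q v r₀ r a (vz v y), j ≠ i := by
    by_contra! hJ
    rw [initialForm, Finset.sum_eq_single_of_mem i (Finset.mem_Icc.mpr ⟨hi.1, hi.2.1⟩)
      (fun j _ hji => if_neg (mt (hJ j) hji)), if_pos hi] at hform
    exact mul_ne_zero (ac_ne_zero hv hπ hres hi.2.2.1)
      (pow_ne_zero _ (ac_ne_zero hv hπ hres hy)) hform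
  rcases hji.lt_or_gt with hji | hij
  · exact mem_Pset_of_mem_Jset hq hji hjJ hi
  · exact mem_Pset_of_mem_Jset hq hij hi hjJ

/-- At valuation `n`, the top term `x ^ q ^ r` of `φ` strictly dominates all the others. -/
def TopTermDominates (q : ℕ) (v : L → WithTop ℤ) (r₀ r : ℕ) (a : ℕ → L) (n : ℤ) : Prop :=
  ∀ i, r₀ ≤ i → i < r → a i ≠ 0 → ((q : ℤ) ^ r - (q : ℤ) ^ i) * n < vz v (a i)

theorem TopTermDominates.mono (hq : 0 < q) {n n' : ℤ} (hn : n' ≤ n)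
    (h : TopTermDominates q v r₀ r a n) : TopTermDominates q v r₀ r a n' := by
  intro i hi₀ hir hai
  have hqir : (q : ℤ) ^ i ≤ (q : ℤ) ^ r := pow_le_pow_right₀ (by exact_mod_cast hq) hir.le
  exact lt_of_le_of_lt (mul_le_mul_of_nonneg_left hn (sub_nonneg.mpr hqir)) (h i hi₀ hir hai)

theorem v_phiMap_of_topTermDominates (hv : IsDVal v) (hr₀r : r₀ ≤ r) (har : a r = 1) {y : L}
    (hy : y ≠ 0) (hdom : TopTermDominates q v r₀ r a (vz v y)) :
    v (phiMap q r₀ r a y) = (((q : ℤ) ^ r * vz v y : ℤ) : WithTop ℤ) := by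
  have htop : v (a r * y ^ q ^ r) = (((q : ℤ) ^ r * vz v y : ℤ) : WithTop ℤ) := by
    rw [hv.map_coeff_mul_pow hy (har ▸ one_ne_zero), har, vz_of_eq_coe hv.map_one, zero_add]
  have hlow : (((q : ℤ) ^ r * vz v y : ℤ) : WithTop ℤ) <
      v (∑ i ∈ Finset.Ico r₀ r, a i * y ^ q ^ i) := by
    refine hv.addValuation.map_lt_sum WithTop.coe_ne_top fun i hi => ?_
    show _ < v _
    obtain ⟨hi₀, hir⟩ := Finset.mem_Ico.mp hi
    rcases eq_or_ne (a i) 0 with hai | hai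
    · rw [hai, zero_mul, hv.map_zero]
      exact WithTop.coe_lt_top _
    · rw [hv.map_coeff_mul_pow hy hai, WithTop.coe_lt_coe]
      linarith [hdom i hi₀ hir hai]
  rw [← htop] at hlow
  rw [phiMap, Finset.Icc_eq_cons_Ico hr₀r, Finset.sum_cons, ← htop]
  exact hv.map_add_eq_of_lt_left hlow

theorem v_iterate_phiMap_of_topTermDominates (hv : IsDVal v) (hq : 0 < q) (hr₀r : r₀ ≤ r)
    (har : a r = 1) {y : L} (hy : y ≠ 0) (hy₀ : vz v y ≤ 0)
    (hdom : TopTermDominates q v r₀ r a (vz v y)) (n : ℕ) :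
    v ((phiMap q r₀ r a)^[n] y) = (((q : ℤ) ^ (r * n) * vz v y : ℤ) : WithTop ℤ) := by
  induction n with
  | zero => simp [hv.coe_vz hy]
  | succ n ih =>
    have hz := vz_of_eq_coe ih
    have hqrn : 1 ≤ (q : ℤ) ^ (r * n) := one_le_pow₀ (by exact_mod_cast hq)
    have hzy : vz v ((phiMap q r₀ r a)^[n] y) ≤ vz v y := by rw [hz]; nlinarith
    rw [Function.iterate_succ_apply', v_phiMap_of_topTermDominates hv hr₀r har
      (hv.ne_zero_of_eq_coe ih) (hdom.mono hq hzy), hz, mul_add_one, pow_add]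
    ring_nf

theorem phiMap_two_zero_one (har : a 1 = 1) (y : L) : phiMap 2 0 1 a y = y * (a 0 + y) := by
  simp [phiMap, Finset.sum_Icc_succ_top, har]
  ring

theorem IsResidue.v_one_add_eq_zero (hv : IsDVal v) (hres : IsResidue v res)
    (h2 : (2 : L) = 0) {x : L} (hx : v x = 0) (hxres : res x ≠ 1) : v (1 + x) = 0 := by
  have hk2 : (1 : k) + 1 = 0 := by
    rw [← hres.map_one, ← hres.map_add _ _ hv.map_one.ge hv.map_one.ge, one_add_one_eq_two, h2,
      hres.map_zero hv]
  have hnonneg : 0 ≤ v (1 + x) :=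
    hv.addValuation.map_le_add hv.map_one.ge hx.ge
  refine le_antisymm (not_lt.mp fun hpos => hxres ?_) hnonneg
  have h0 := (hres.eq_zero_iff _ hnonneg).mpr hpos
  rw [hres.map_add _ _ hv.map_one.ge hx.ge, hres.map_one] at h0
  linear_combination h0 - hk2

theorem v_phiMap_phiMap_of_char_two (hv : IsDVal v) (hres : IsResidue v res) (h2 : (2 : L) = 0)
    (har : a 1 = 1) {m : ℤ} (ha₀ : v (a 0) = m) (hm : m < 0) {x : L} (hx : v x = 0)
    (hxres : res x ≠ 1) :
    v (phiMap 2 0 1 a (phiMap 2 0 1 a x)) = ((2 * m : ℤ) : WithTop ℤ) := by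
  have ha₀x : v (a 0) < v x := by rw [ha₀, hx]; exact_mod_cast hm
  have hφx : v (phiMap 2 0 1 a x) = m := by
    rw [phiMap_two_zero_one har, hv.map_mul, hx, zero_add,
      hv.map_add_eq_of_lt_left ha₀x, ha₀]
  have hsum : a 0 + phiMap 2 0 1 a x = a 0 * (1 + x) + x ^ 2 := by
    rw [phiMap_two_zero_one har]; ring
  have hlead : v (a 0 * (1 + x)) = m := by
    rw [hv.map_mul, ha₀, hres.v_one_add_eq_zero hv h2 hx hxres, add_zero]
  have hsq : v (x ^ 2) = 0 := by
    rw [hv.map_pow, hx, smul_zero]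
  have hlt : v (a 0 * (1 + x)) < v (x ^ 2) := by rw [hlead, hsq]; exact_mod_cast hm
  rw [phiMap_two_zero_one har (phiMap 2 0 1 a x), hv.map_mul, hφx, hsum,
    hv.map_add_eq_of_lt_left hlt, hlead, two_mul, WithTop.coe_add]

theorem one_le_pow_sub_pow {q i r : ℕ} (hq : 1 < q) (hir : i < r) :
    (1 : ℤ) ≤ (q : ℤ) ^ r - (q : ℤ) ^ i := by
  have : (q : ℤ) ^ i < (q : ℤ) ^ r := pow_lt_pow_right₀ (by exact_mod_cast hq) hir
  omega

theorem eq_two_of_pow_sub_pow_eq_one {q i r : ℕ} (hq : 2 ≤ q) (hir : i < r)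
    (h : (q : ℤ) ^ r - (q : ℤ) ^ i = 1) : q = 2 ∧ r = 1 ∧ i = 0 := by
  have hqr : q ^ r = q ^ i + 1 := by
    have : (q : ℤ) ^ r = (q : ℤ) ^ i + 1 := by omega
    exact_mod_cast this
  have hi : i = 0 := by
    have hdvd : q ^ i ∣ 1 := (Nat.dvd_add_right dvd_rfl).mp (hqr ▸ pow_dvd_pow q hir.le)
    exact Nat.pow_right_injective hq (Nat.dvd_one.mp hdvd)
  subst hi
  rw [pow_zero] at hqr
  have hq2 : q = 2 := le_antisymm (by simpa [hqr] using Nat.le_self_pow (n := r) (by omega) q) hq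
  subst hq2
  exact ⟨rfl, Nat.pow_right_injective le_rfl hqr, rfl⟩

/-- The top term can fail to dominate only for `φ(x) = a₀ x + x ^ 2` over `F₂` and `v x = 0`; there
`R_v(0) ∋ 1` is exactly what rules out cancellation in `φ(φ x)`. -/
theorem v_phiMap_phiMap_of_not_topTermDominates (hv : IsDVal v) (hres : IsResidue v res)
    (hq : 2 ≤ q) (hqL : (q : L) = 0) (hr₀r : r₀ ≤ r) (har : a r = 1) {x : L} (hx : x ≠ 0)
    (hX : vz v x ≤ 0) (hexc : ¬ Exc q v π res r₀ r a x) {m : ℤ} (hm : m < 0)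
    (hm_le : ∀ j, r₀ ≤ j → j ≤ r → a j ≠ 0 → m ≤ vz v (a j) + (q : ℤ) ^ j * vz v x)
    (hdom : ¬ TopTermDominates q v r₀ r a m) :
    v (phiMap q r₀ r a (phiMap q r₀ r a x)) = (((q : ℤ) ^ r * m : ℤ) : WithTop ℤ) := by
  simp only [TopTermDominates, not_forall, not_lt] at hdom
  obtain ⟨i, hi₀, hir, hai, hle⟩ := hdom
  have hA := one_le_pow_sub_pow hq hir
  have hB : (0 : ℤ) < (q : ℤ) ^ i := by positivity
  have hmi := hm_le i hi₀ hir.le hai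
  have hA1 : (q : ℤ) ^ r - (q : ℤ) ^ i = 1 := by nlinarith
  have hX0 : vz v x = 0 := by nlinarith
  obtain ⟨rfl, rfl, rfl⟩ := eq_two_of_pow_sub_pow_eq_one hq hir hA1
  obtain rfl : r₀ = 0 := by omega
  have ha₀ : v (a 0) = m := by
    norm_num [hX0] at hmi hle
    rw [← hv.coe_vz hai, le_antisymm hle hmi]
  have hxres : res x ≠ 1 := fun h1 =>
    hexc ⟨by rw [hX0]; exact Or.inl rfl, Or.inl (by simp [ac, hX0, h1])⟩
  rw [v_phiMap_phiMap_of_char_two hv hres (by exact_mod_cast hqL) har ha₀ hm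
    (by rw [← hv.coe_vz hx, hX0]; rfl) hxres]
  norm_num

theorem v_iterate_phiMap_succ (hv : IsDVal v) (hπ : v π = 1) (hres : IsResidue v res)
    (hq : 2 ≤ q) (hqL : (q : L) = 0) (hr₀r : r₀ ≤ r) (har : a r = 1) {x : L} (hx : x ≠ 0)
    (hX : vz v x ≤ 0) (hexc : ¬ Exc q v π res r₀ r a x) {i : ℕ}
    (hi : i ∈ Jset q v r₀ r a (vz v x)) (hm : vz v (a i) + (q : ℤ) ^ i * vz v x < 0) (n : ℕ) :
    v ((phiMap q r₀ r a)^[n + 1] x) =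
      (((q : ℤ) ^ (r * n) * (vz v (a i) + (q : ℤ) ^ i * vz v x) : ℤ) : WithTop ℤ) := by
  set m := vz v (a i) + (q : ℤ) ^ i * vz v x
  set φ := phiMap q r₀ r a
  have h₁ : v (φ x) = m := v_phiMap_of_initialForm_ne_zero hv hπ hres hx hi
    (initialForm_ne_zero_of_not_exc hv hπ hres hq hx hi hexc)
  have h₂ : v (φ (φ x)) = (((q : ℤ) ^ r * m : ℤ) : WithTop ℤ) := by
    by_cases hdom : TopTermDominates q v r₀ r a m
    · rw [v_phiMap_of_topTermDominates hv hr₀r har (hv.ne_zero_of_eq_coe h₁)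
        (vz_of_eq_coe h₁ ▸ hdom), vz_of_eq_coe h₁]
    · exact v_phiMap_phiMap_of_not_topTermDominates hv hres hq hqL hr₀r har hx hX hexc hm
        (fun j hj₀ hjr haj => vz_term_le_of_mem_Jset hi hj₀ hjr haj) hdom
  have hdom₂ : TopTermDominates q v r₀ r a ((q : ℤ) ^ r * m) := by
    intro j hj₀ hjr haj
    have hA := one_le_pow_sub_pow hq hjr
    have hQ : (q : ℤ) ≤ (q : ℤ) ^ r := le_self_pow₀ (by exact_mod_cast hq.trans' one_le_two)
      (by omega)
    have hmj : m ≤ vz v (a j) := le_vz_of_mem_Jset hX hi hj₀ hjr.le haj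
    have hQm : (q : ℤ) ^ r * m < m := by nlinarith
    nlinarith
  cases n with
  | zero => simpa using h₁
  | succ n =>
    rw [Function.iterate_succ_apply, Function.iterate_succ_apply,
      v_iterate_phiMap_of_topTermDominates hv (by omega) hr₀r har (hv.ne_zero_of_eq_coe h₂)
        (by rw [vz_of_eq_coe h₂]; exact mul_nonpos_of_nonneg_of_nonpos (by positivity) hm.le)
        (vz_of_eq_coe h₂ ▸ hdom₂), vz_of_eq_coe h₂]
    ring_nf

theorem div_le_div_mul_of_neg {m c d Q : ℝ} (hm : m < 0) (hmc : m ≤ c) (hd : 1 ≤ d)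
    (hQ : 0 < Q) : m / Q ≤ c / (d * Q) := by
  rw [div_le_div_iff₀ hQ (by positivity)]
  nlinarith [mul_neg_of_neg_of_pos hm hQ, mul_le_mul_of_nonneg_right hmc hQ.le]

theorem tendsto_locSeq_of_vz_iterate {α : Type u} {w : α → WithTop ℤ} {φ : α → α} {x : α}
    (hq : 0 < q) {m : ℤ} (hm : m ≤ 0) (h : ∀ n, vz w (φ^[n + 1] x) = (q : ℤ) ^ (r * n) * m) :
    Tendsto (locSeq q r w φ x) atTop (𝓝 (m / (q : ℝ) ^ r)) := by
  have hseq (n : ℕ) : locSeq q r w φ x (n + 1) = m / (q : ℝ) ^ r := by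
    rw [locSeq, h, min_eq_right (mul_nonpos_of_nonneg_of_nonpos (by positivity) hm)]
    have : (q : ℝ) ≠ 0 := by positivity
    field_simp
    push_cast
    ring
  refine (tendsto_add_atTop_iff_nat 1).mp ?_
  simp only [hseq, tendsto_const_nhds]

theorem statement4_general
    (p q : ℕ) (hp : p.Prime) (hq : ∃ s : ℕ, 0 < s ∧ q = p ^ s)
    [CharP L p]
    (v : L → WithTop ℤ) (hv : IsDVal v)
    (π : L) (hπ : v π = 1) (res : L → k) (hres : IsResidue v res)
    (r₀ r : ℕ) (hr1 : 1 ≤ r) (hr₀r : r₀ ≤ r)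
    (a : ℕ → L) (har : a r = 1)
    (hS : ∃ i ∈ Finset.Icc r₀ (r - 1), v (a i) < 0)
    (x : L) (hx : x ≠ 0) (hvx : v x ≤ 0) :
    Exc q v π res r₀ r a x ∨
    ∃ V : ℝ, Filter.Tendsto (locSeq q r v (phiMap q r₀ r a) x) Filter.atTop (nhds V) ∧
      ∀ i ∈ Finset.Icc r₀ (r - 1), a i ≠ 0 →
        V ≤ (vz v (a i) : ℝ) / (((q : ℝ) ^ r - (q : ℝ) ^ i) * (q : ℝ) ^ r) := by
  by_cases hexc : Exc q v π res r₀ r a x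
  · exact Or.inl hexc
  right
  obtain ⟨s, hs, hqs⟩ := hq
  have hq2 : 2 ≤ q := hqs ▸ hp.two_le.trans (Nat.le_self_pow hs.ne' p)
  have hqL : (q : L) = 0 := by simp [hqs, CharP.cast_eq_zero, hs.ne']
  have hX : vz v x ≤ 0 := by rw [← hv.coe_vz hx] at hvx; exact_mod_cast hvx
  obtain ⟨i, hi⟩ := Jset_nonempty hr₀r (har ▸ one_ne_zero) (vz v x : ℚ)
  set m := vz v (a i) + (q : ℤ) ^ i * vz v x
  have hm_le (j : ℕ) (hj : j ∈ Finset.Icc r₀ (r - 1)) (haj : a j ≠ 0) : m ≤ vz v (a j) :=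
    le_vz_of_mem_Jset hX hi (Finset.mem_Icc.mp hj).1 (by grind) haj
  have hm : m < 0 := by
    obtain ⟨j, hj, hvj⟩ := hS
    have haj : a j ≠ 0 := fun h0 => by simp [h0, hv.map_zero] at hvj
    rw [← hv.coe_vz haj] at hvj
    exact (hm_le j hj haj).trans_lt (by exact_mod_cast hvj)
  refine ⟨m / (q : ℝ) ^ r, tendsto_locSeq_of_vz_iterate (by omega) hm.le fun n => vz_of_eq_coe
    (v_iterate_phiMap_succ hv hπ hres hq2 hqL hr₀r har hx hX hexc hi hm n), fun j hj haj => ?_⟩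
  refine div_le_div_mul_of_neg (by exact_mod_cast hm) (by exact_mod_cast hm_le j hj haj) ?_
    (by positivity)
  exact_mod_cast one_le_pow_sub_pow hq2 (by grind : j < r)

/-- Lemmas 2.6 and 2.7: if `v ∈ S` and `v(x) ≤ 0`, then either `Exc(x)` holds or the
local-height sequence converges to a limit `V ≤ M_v / q^r`. -/
theorem statement4
    (p q : ℕ) (hp : p.Prime) (hq : ∃ s : ℕ, 0 < s ∧ q = p ^ s)
    [CharP L p] (F : Subfield L) (hF : Nat.card F = q)
    (v : L → WithTop ℤ) (hv : IsDVal v)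
    (π : L) (hπ : v π = 1) (res : L → k) (hres : IsResidue v res)
    (r₀ r : ℕ) (hr1 : 1 ≤ r) (hr₀r : r₀ ≤ r)
    (a : ℕ → L) (har₀ : a r₀ ≠ 0) (har : a r = 1)
    (hS : ∃ i ∈ Finset.Icc r₀ (r - 1), v (a i) < 0)
    (x : L) (hx : x ≠ 0) (hvx : v x ≤ 0) :
    Exc q v π res r₀ r a x ∨
    ∃ V : ℝ, Filter.Tendsto (locSeq q r v (phiMap q r₀ r a) x) Filter.atTop (nhds V) ∧
      ∀ i ∈ Finset.Icc r₀ (r - 1), a i ≠ 0 →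
        V ≤ (vz v (a i) : ℝ) / (((q : ℝ) ^ r - (q : ℝ) ^ i) * (q : ℝ) ^ r) :=
  statement4_general p q hp hq v hv π hπ res hres r₀ r hr1 hr₀r a har hS x hx hvx

end Drinfeld
end

section
/- Example 3.4 of the paper (optimality of the exponent, failure of the naive local Lehmer bound): let q be a power of the prime p, let r >= 2 and m >= r be integers, and set d = q^m - 1. Let L be a field of characteristic p equipped with a normalized discrete valuation v, let t be a nonzero element of L with v(t) = d, and suppose alpha in L satisfies alpha^d = alpha + 1/t. Set x = t * alpha and let phi : L -> L be given by phi(y) = y^(q^r) - t^(1-q) * y^q (the Drinfeld module phi_t = tau^r - t^(1-q) tau). Then: v(alpha) = -1; v(phi^i(x)) = d - q^i for every 0 <= i <= m; v(phi^(m+1)(x)) = -q^(m+1) + q^m - 1; v(phi^(m+1+k)(x)) = q^(r*k) * (-q^(m+1) + q^m - 1) for every k >= 0; hence the sequence min(0, v(phi^n(x)))/q^(r*n) converges to V = (-q^(m+1) + q^m - 1)/q^(r(m+1)), and this limit satisfies 0 < -V < q^(1-r)/d^(r-1). -/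
/-!
Comparing valuations in `α^d = α + 1/t` forces `v(α) = -1`, so `v(tα) = d - 1`. In
`φ_t(y) = y^(q^r) - t^(1-q) y^q` the twisting term has the smaller valuation as long as
`v(y) ≥ -1` (this needs `r ≤ m`), which turns `d - q^i` into `d - q^(i+1)`; so it lasts up to
`i = m`. At `i = m + 1` the valuation `d - q^(m+1)` is so negative that the Frobenius term
dominates, and it keeps dominating from then on, each step multiplying the valuation by `q^r`.
Hence the height sequence is eventually constant.
-/

open Filter Topology Finset

universe u

section Drinfeld

variable {L : Type u} [Field L] {k : Type*} [Field k]

lemma IsDVal.map_one_s18 {v : L → WithTop ℤ} (hv : IsDVal v) : v 1 = 0 := by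
  obtain ⟨a, ha⟩ := WithTop.ne_top_iff_exists.mp (hv.ne_top 1 one_ne_zero)
  have h := hv.map_mul 1 1
  rw [one_mul, ← ha, ← WithTop.coe_add, WithTop.coe_eq_coe] at h
  rw [← ha, WithTop.coe_eq_zero]
  omega

def IsDVal.toAddValuation_s18 {v : L → WithTop ℤ} (hv : IsDVal v) : AddValuation L (WithTop ℤ) :=
  AddValuation.of v hv.map_zero hv.map_one_s18 hv.add_min hv.map_mul

/-- The image of `t` under the Drinfeld module `φ_t = τ^r - t^(1-q) τ`. -/
noncomputable def drinfeldT (q r : ℕ) (t : L) (y : L) : L :=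
  y ^ q ^ r - t ^ ((1 : ℤ) - (q : ℤ)) * y ^ q

lemma neg_pow_succ_add_pow_sub_one_nonpos {q : ℤ} (hq : 1 ≤ q) (m : ℕ) :
    -q ^ (m + 1) + q ^ m - 1 ≤ 0 := by
  rw [pow_succ]
  nlinarith [one_le_pow₀ (M₀ := ℤ) hq (n := m)]

namespace AddValuation

variable (w : AddValuation L (WithTop ℤ))

lemma map_zpow_of_eq_coe {x : L} {c : ℤ} (hx : w x = c) (n : ℤ) :
    w (x ^ n) = (n * c : ℤ) := by
  cases n with
  | ofNat n => simp [map_pow, hx, ← WithTop.coe_nsmul]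
  | negSucc n =>
    rw [zpow_negSucc, map_inv, map_pow, hx, ← WithTop.coe_nsmul,
      ← WithTop.LinearOrderedAddCommGroup.coe_neg, Int.negSucc_eq]
    congr 1
    simp only [nsmul_eq_mul, Nat.cast_add, Nat.cast_one]
    ring

lemma map_eq_neg_one_of_pow_eq_add {d : ℕ} (hd : 1 < d) {α u : L} (hu : w u = (-d : ℤ))
    (hα : α ^ d = α + u) : w α = (-1 : ℤ) := by
  have hα0 : α ≠ 0 := by
    rintro rfl
    rw [zero_pow (by omega), zero_add] at hα
    rw [← hα, map_zero] at hu
    exact WithTop.top_ne_coe hu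
  obtain ⟨a, ha⟩ := WithTop.ne_top_iff_exists.mp ((w.ne_top_iff).mpr hα0)
  have hpow : w (α + u) = (d * a : ℤ) := by
    rw [← hα, ← map_zpow_of_eq_coe w ha.symm, zpow_natCast]
  rcases lt_trichotomy a (-d) with hlt | heq | hgt
  · rw [map_add_eq_of_lt_left w (by rw [← ha, hu]; exact_mod_cast hlt), ← ha,
      WithTop.coe_eq_coe] at hpow
    nlinarith
  · have hle := w.map_add α u
    rw [← ha, hu, heq, min_self, hpow, WithTop.coe_le_coe] at hle
    nlinarith
  · rw [map_add_eq_of_lt_right w (by rw [← ha, hu]; exact_mod_cast hgt), hu,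
      WithTop.coe_eq_coe] at hpow
    rw [← ha, WithTop.coe_eq_coe]
    nlinarith

lemma map_drinfeldT {q r : ℕ} {t y : L} {D c : ℤ} (ht : w t = D) (hy : w y = c)
    (hne : q ^ r * c ≠ (1 - q) * D + q * c) :
    w (drinfeldT q r t y) = (min (q ^ r * c) ((1 - q) * D + q * c) : ℤ) := by
  have hfrob : w (y ^ q ^ r) = (q ^ r * c : ℤ) := by
    rw [← zpow_natCast, map_zpow_of_eq_coe w hy]; push_cast; rfl
  have htwist : w (t ^ ((1 : ℤ) - q) * y ^ q) = ((1 - q) * D + q * c : ℤ) := by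
    rw [map_mul, map_zpow_of_eq_coe w ht, ← zpow_natCast, map_zpow_of_eq_coe w hy]; rfl
  rw [drinfeldT, sub_eq_add_neg, map_add_of_distinct_val, map_neg, hfrob, htwist]
  · rfl
  · rw [map_neg, hfrob, htwist]; exact_mod_cast hne

lemma map_iterate_drinfeldT_of_le {q r m : ℕ} (hq : 2 ≤ q) (hr : 1 ≤ r) (hrm : r ≤ m)
    {t x : L} (ht : w t = ((q : ℤ) ^ m - 1 : ℤ)) (hx : w x = ((q : ℤ) ^ m - 1 - 1 : ℤ)) :
    ∀ i ≤ m + 1, w ((drinfeldT q r t)^[i] x) = ((q : ℤ) ^ m - 1 - (q : ℤ) ^ i : ℤ) := by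
  intro i
  induction i with
  | zero => simpa using hx
  | succ i ih =>
    intro hi
    have hqr : (q : ℤ) ≤ (q : ℤ) ^ r := le_self_pow₀ (by omega) (by omega)
    have hrm' : (q : ℤ) ^ r ≤ (q : ℤ) ^ m := pow_le_pow_right₀ (by omega) hrm
    have him : (q : ℤ) ^ i ≤ (q : ℤ) ^ m := pow_le_pow_right₀ (by omega) (by omega)
    -- `(q^r - q)(c + 1) ≥ 0` for the current valuation `c ≥ -1`
    have htwist_lt : (1 - q) * ((q : ℤ) ^ m - 1) + q * ((q : ℤ) ^ m - 1 - (q : ℤ) ^ i)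
        < (q : ℤ) ^ r * ((q : ℤ) ^ m - 1 - (q : ℤ) ^ i) := by
      have hq2 : (2 : ℤ) ≤ q := by exact_mod_cast hq
      nlinarith [mul_nonneg (sub_nonneg.mpr hqr)
        (by linarith : (0 : ℤ) ≤ (q : ℤ) ^ m - (q : ℤ) ^ i)]
    rw [Function.iterate_succ_apply', map_drinfeldT w ht (ih (by omega)) htwist_lt.ne',
      min_eq_right htwist_lt.le, pow_succ]
    congr 1
    ring

lemma map_iterate_drinfeldT_of_frobenius_lt {q r : ℕ} (hq : 0 < q) (hr : 0 < r) {t y : L}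
    {D c : ℤ} (ht : w t = D) (hy : w y = c) (hc : c ≤ 0)
    (hfrob : (q ^ r - q) * c < (1 - q) * D) :
    ∀ j, w ((drinfeldT q r t)^[j] y) = ((q : ℤ) ^ (r * j) * c : ℤ) := by
  intro j
  induction j with
  | zero => simpa using hy
  | succ j ih =>
    have hqr : (q : ℤ) ≤ (q : ℤ) ^ r := le_self_pow₀ (by omega) (by omega)
    have hpow : (1 : ℤ) ≤ (q : ℤ) ^ (r * j) := one_le_pow₀ (by omega)
    have hfrob_lt : (q : ℤ) ^ r * ((q : ℤ) ^ (r * j) * c)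
        < (1 - q) * D + q * ((q : ℤ) ^ (r * j) * c) := by
      nlinarith [mul_nonneg (sub_nonneg.mpr hqr) (sub_nonneg.mpr hpow)]
    rw [Function.iterate_succ_apply', map_drinfeldT w ht ih hfrob_lt.ne, min_eq_left hfrob_lt.le,
      mul_add_one, pow_add]
    congr 1
    ring

lemma map_iterate_drinfeldT_add {q r m : ℕ} (hq : 2 ≤ q) (hr : 2 ≤ r) (hrm : r ≤ m)
    {t x : L} (ht : w t = ((q : ℤ) ^ m - 1 : ℤ)) (hx : w x = ((q : ℤ) ^ m - 1 - 1 : ℤ))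
    (j : ℕ) :
    w ((drinfeldT q r t)^[m + 1 + j] x)
      = ((q : ℤ) ^ (r * j) * (-(q : ℤ) ^ (m + 1) + (q : ℤ) ^ m - 1) : ℤ) := by
  have hE := neg_pow_succ_add_pow_sub_one_nonpos (by omega : (1 : ℤ) ≤ q) m
  have hpivot :
      w ((drinfeldT q r t)^[m + 1] x) = (-(q : ℤ) ^ (m + 1) + (q : ℤ) ^ m - 1 : ℤ) := by
    rw [map_iterate_drinfeldT_of_le w hq (by omega) hrm ht hx _ le_rfl]
    congr 1
    ring
  rw [add_comm, Function.iterate_add_apply]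
  refine map_iterate_drinfeldT_of_frobenius_lt w (by omega) (by omega) ht hpivot hE ?_ j
  -- the valuation at the pivot is `E := -q^(m+1) + q^m - 1 < 0`, and `(1 - q)(q^m - 1) = E + q`
  have hqr : (q : ℤ) ^ 2 ≤ (q : ℤ) ^ r := pow_le_pow_right₀ (by omega) hr
  rw [pow_succ] at hE ⊢
  nlinarith [mul_nonpos_of_nonneg_of_nonpos (by nlinarith : (0 : ℤ) ≤ (q : ℤ) ^ r - q - 1) hE]

end AddValuation

lemma tendsto_locSeq_of_map_iterate {X : Type*} {v : X → WithTop ℤ} {φ : X → X} {x : X}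
    {q r N : ℕ} {c : ℤ} (hq : q ≠ 0) (hc : c ≤ 0)
    (h : ∀ j, v (φ^[N + j] x) = ((q : ℤ) ^ (r * j) * c : ℤ)) :
    Tendsto (locSeq q r v φ x) atTop (𝓝 (c / (q : ℝ) ^ (r * N))) := by
  refine tendsto_atTop_of_eventually_const (i₀ := N) fun n hn => ?_
  obtain ⟨j, rfl⟩ := Nat.exists_eq_add_of_le hn
  have hc' : (q : ℤ) ^ (r * j) * c ≤ 0 := mul_nonpos_of_nonneg_of_nonpos (by positivity) hc
  rw [locSeq, vz, h j, WithTop.untopD_coe, min_eq_right hc', mul_add, pow_add]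
  push_cast
  rw [mul_comm ((q : ℝ) ^ (r * N)), mul_div_mul_left _ _ (by positivity)]

lemma pow_succ_sub_pow_add_one_div_lt {q : ℝ} (hq : 1 < q) {r m : ℕ} (hr : 1 ≤ r)
    (hm : 1 ≤ m) :
    (q ^ (m + 1) - q ^ m + 1) / q ^ (r * (m + 1))
      < q ^ ((1 : ℤ) - r) / (q ^ m - 1) ^ (r - 1) := by
  obtain ⟨s, rfl⟩ := Nat.exists_eq_add_of_le hr
  have hX : 1 < q ^ m := one_lt_pow₀ hq (by omega)
  have hrhs :
      q ^ ((1 : ℤ) - ↑(1 + s)) / (q ^ m - 1) ^ (1 + s - 1) = 1 / (q ^ s * (q ^ m - 1) ^ s) := by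
    rw [show (1 : ℤ) - ↑(1 + s) = -(s : ℤ) by push_cast; ring, zpow_neg, zpow_natCast,
      Nat.add_sub_cancel_left]
    ring
  rw [hrhs, div_lt_div_iff₀ (by positivity) (mul_pos (by positivity) (pow_pos (by linarith) s))]
  calc (q ^ (m + 1) - q ^ m + 1) * (q ^ s * (q ^ m - 1) ^ s)
      < q ^ (m + 1) * (q ^ s * (q ^ m - 1) ^ s) :=
        mul_lt_mul_of_pos_right (by linarith) (mul_pos (by positivity) (pow_pos (by linarith) s))
    _ ≤ q ^ (m + 1) * (q ^ s * (q ^ m) ^ s) := by gcongr; linarith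
    _ = 1 * q ^ ((1 + s) * (m + 1)) := by ring

theorem statement18_general
    (p q : ℕ) (hp : p.Prime) (hq : ∃ s : ℕ, 0 < s ∧ q = p ^ s)
    (r m : ℕ) (hr : 2 ≤ r) (hm : r ≤ m)
    (v : L → WithTop ℤ) (hv : IsDVal v)
    (t : L) (hvt : v t = (((q : ℤ) ^ m - 1 : ℤ) : WithTop ℤ))
    (α : L) (hα : α ^ (q ^ m - 1) = α + 1 / t) :
    let φ : L → L := fun y => y ^ q ^ r - t ^ ((1 : ℤ) - (q : ℤ)) * y ^ q
    let V : ℝ := (-(q : ℝ) ^ (m + 1) + (q : ℝ) ^ m - 1) / (q : ℝ) ^ (r * (m + 1))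
    v α = ((-1 : ℤ) : WithTop ℤ) ∧
    (∀ i : ℕ, i ≤ m →
      v (φ^[i] (t * α)) = (((q : ℤ) ^ m - 1 - (q : ℤ) ^ i : ℤ) : WithTop ℤ)) ∧
    v (φ^[m + 1] (t * α))
      = ((-(q : ℤ) ^ (m + 1) + (q : ℤ) ^ m - 1 : ℤ) : WithTop ℤ) ∧
    (∀ j : ℕ,
      v (φ^[m + 1 + j] (t * α))
        = (((q : ℤ) ^ (r * j) * (-(q : ℤ) ^ (m + 1) + (q : ℤ) ^ m - 1) : ℤ) : WithTop ℤ)) ∧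
    Filter.Tendsto (locSeq q r v φ (t * α)) Filter.atTop (nhds V) ∧
    0 < -V ∧
    -V < (q : ℝ) ^ ((1 : ℤ) - (r : ℤ)) / ((q : ℝ) ^ m - 1) ^ (r - 1) := by
  intro φ V
  have hq2 : 2 ≤ q := by
    obtain ⟨s, hs, rfl⟩ := hq; exact hp.two_le.trans (Nat.le_self_pow hs.ne' p)
  obtain ⟨w, rfl⟩ : ∃ w : AddValuation L (WithTop ℤ), ⇑w = v :=
    ⟨hv.toAddValuation_s18, rfl⟩
  have hqm : 4 ≤ q ^ m :=
    (Nat.pow_le_pow_left hq2 2).trans (Nat.pow_le_pow_right (by omega) (by omega))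
  have hvα : w α = (-1 : ℤ) := by
    refine w.map_eq_neg_one_of_pow_eq_add (by omega) ?_ hα
    rw [one_div, AddValuation.map_inv, hvt, Nat.cast_sub (by omega)]
    push_cast
    rfl
  have hvx : w (t * α) = ((q : ℤ) ^ m - 1 - 1 : ℤ) := by
    rw [AddValuation.map_mul, hvt, hvα, ← WithTop.coe_add]; rfl
  have hE := neg_pow_succ_add_pow_sub_one_nonpos (by omega : (1 : ℤ) ≤ q) m
  have htail : ∀ j, w (φ^[m + 1 + j] (t * α))
      = ((q : ℤ) ^ (r * j) * (-(q : ℤ) ^ (m + 1) + (q : ℤ) ^ m - 1) : ℤ) :=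
    w.map_iterate_drinfeldT_add hq2 hr hm hvt hvx
  have hq1 : (1 : ℝ) < q := by exact_mod_cast hq2
  have hnegV : -V = ((q : ℝ) ^ (m + 1) - (q : ℝ) ^ m + 1) / (q : ℝ) ^ (r * (m + 1)) := by
    simp only [V]; ring
  refine ⟨hvα, fun i hi => w.map_iterate_drinfeldT_of_le hq2 (by omega) hm hvt hvx i (by omega),
    by simpa using htail 0, htail, ?_, ?_, ?_⟩
  · have := tendsto_locSeq_of_map_iterate (by omega) hE htail
    push_cast at this
    exact this
  · rw [hnegV]
    exact div_pos (by linarith [pow_le_pow_right₀ hq1.le (by omega : m ≤ m + 1)])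
      (by positivity)
  · rw [hnegV]
    exact pow_succ_sub_pow_add_one_div_lt hq1 (by omega) (by omega)

/-- Example 3.4 (optimality of the exponent, failure of the naive local Lehmer bound):
for `d = q^m - 1`, `v(t) = d`, `α^d = α + 1/t`, `x = t·α` and
`φ(y) = y^(q^r) - t^(1-q)·y^q`, one has `v(α) = -1`, `v(φ^i(x)) = d - q^i` for `i ≤ m`,
`v(φ^(m+1)(x)) = -q^(m+1) + q^m - 1`, `v(φ^(m+1+k)(x)) = q^(rk)(-q^(m+1) + q^m - 1)`,
the local-height sequence converges to `V = (-q^(m+1) + q^m - 1)/q^(r(m+1))`, and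
`0 < -V < q^(1-r)/d^(r-1)`. -/
theorem statement18
    (p q : ℕ) (hp : p.Prime) (hq : ∃ s : ℕ, 0 < s ∧ q = p ^ s)
    (r m : ℕ) (hr : 2 ≤ r) (hm : r ≤ m)
    [CharP L p]
    (v : L → WithTop ℤ) (hv : IsDVal v)
    (t : L) (ht : t ≠ 0) (hvt : v t = (((q : ℤ) ^ m - 1 : ℤ) : WithTop ℤ))
    (α : L) (hα : α ^ (q ^ m - 1) = α + 1 / t) :
    let φ : L → L := fun y => y ^ q ^ r - t ^ ((1 : ℤ) - (q : ℤ)) * y ^ q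
    let V : ℝ := (-(q : ℝ) ^ (m + 1) + (q : ℝ) ^ m - 1) / (q : ℝ) ^ (r * (m + 1))
    v α = ((-1 : ℤ) : WithTop ℤ) ∧
    (∀ i : ℕ, i ≤ m →
      v (φ^[i] (t * α)) = (((q : ℤ) ^ m - 1 - (q : ℤ) ^ i : ℤ) : WithTop ℤ)) ∧
    v (φ^[m + 1] (t * α))
      = ((-(q : ℤ) ^ (m + 1) + (q : ℤ) ^ m - 1 : ℤ) : WithTop ℤ) ∧
    (∀ j : ℕ,
      v (φ^[m + 1 + j] (t * α))
        = (((q : ℤ) ^ (r * j) * (-(q : ℤ) ^ (m + 1) + (q : ℤ) ^ m - 1) : ℤ) : WithTop ℤ)) ∧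
    Filter.Tendsto (locSeq q r v φ (t * α)) Filter.atTop (nhds V) ∧
    0 < -V ∧
    -V < (q : ℝ) ^ ((1 : ℤ) - (r : ℤ)) / ((q : ℝ) ^ m - 1) ^ (r - 1) :=
  statement18_general p q hp hq r m hr hm v hv t hvt α hα

end Drinfeld
end
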